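/- arXiv:1709.08282 — 4 statements merged into one kernel-verified Lean document; each statement's English description precedes it below -/
import Mathlib

section
/- Let Φ : ℝⁿ → [0,∞) be measurable and f : ℝⁿ → ℝ a nonnegative Schwartz (or bounded integrable continuous) function with f = 1 on the unit ball B(0,1). If the Hausdorff operator H_Φ f(x) = ∫_{ℝⁿ} Φ(y) f(x/|y|) dy satisfies ∫_{B(0,1)} |H_Φ f(x)| dx < ∞, then ∫_{B(0,1)} |y|ⁿ Φ(y) dy < ∞ and ∫_{B(0,1)ᶜ} Φ(y) dy < ∞. -/
/-!
If `‖x‖ < min ‖y‖ 1` then `‖y‖⁻¹ • x` lies in the unit ball `B`, where `f = 1`. Keeping only these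
pairs and applying Tonelli,
`∫_B ∫ Φ(y) f(‖y‖⁻¹ • x) dy dx ≥ ∫ Φ(y) |B(0, min ‖y‖ 1)| dy = |B| ∫ Φ(y) (min ‖y‖ 1)ⁿ dy`,
and the last integral is the sum of the two integrals in the conclusion.
-/

open MeasureTheory Metric Complex
open scoped ENNReal NNReal RealInnerProductSpace FourierTransform

noncomputable section

def hausdorffOp {n : ℕ} (Φ : EuclideanSpace ℝ (Fin n) → ℝ) (f : EuclideanSpace ℝ (Fin n) → ℂ)
    (x : EuclideanSpace ℝ (Fin n)) : ℂ :=
  ∫ y, (Φ y : ℂ) * f (‖y‖⁻¹ • x)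

def hausdorffAdj {n : ℕ} (Φ : EuclideanSpace ℝ (Fin n) → ℝ) (f : EuclideanSpace ℝ (Fin n) → ℂ)
    (x : EuclideanSpace ℝ (Fin n)) : ℂ :=
  ∫ y, (Φ y : ℂ) * ((‖y‖ ^ n : ℝ) : ℂ) * f (‖y‖ • x)

def STFT {n : ℕ} (φ f : EuclideanSpace ℝ (Fin n) → ℂ) (x ξ : EuclideanSpace ℝ (Fin n)) : ℂ :=
  ∫ t, f t * (starRingEnd ℂ) (φ (t - x)) * Complex.exp ((-(2 * Real.pi * ⟪t, ξ⟫) : ℝ) * Complex.I)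

def LpE {α : Type*} [MeasurableSpace α] (p : ℝ≥0∞) (μ : Measure α) (g : α → ℝ≥0∞) : ℝ≥0∞ :=
  if p = ∞ then essSup g μ else (∫⁻ a, g a ^ p.toReal ∂μ) ^ (1 / p.toReal)

def modNorm {n : ℕ} (p q : ℝ≥0∞) (φ f : EuclideanSpace ℝ (Fin n) → ℂ) : ℝ≥0∞ :=
  LpE q volume (fun ξ => LpE p volume (fun x => (‖STFT φ f x ξ‖₊ : ℝ≥0∞)))

def amalgamNorm {n : ℕ} (p q : ℝ≥0∞) (φ f : EuclideanSpace ℝ (Fin n) → ℂ) : ℝ≥0∞ :=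
  LpE p volume (fun x => LpE q volume (fun ξ => (‖STFT φ f x ξ‖₊ : ℝ≥0∞)))

def basicAssumption {n : ℕ} (Φ : EuclideanSpace ℝ (Fin n) → ℝ) : Prop :=
  (∫⁻ y in ball (0 : EuclideanSpace ℝ (Fin n)) 1, ENNReal.ofReal (‖y‖ ^ n * Φ y)) < ⊤ ∧
  (∫⁻ y in (ball (0 : EuclideanSpace ℝ (Fin n)) 1)ᶜ, ENNReal.ofReal (Φ y)) < ⊤

variable {E : Type*} [NormedAddCommGroup E]

theorem inv_norm_smul_mem_ball_one [NormedSpace ℝ E] {x y : E} (h : ‖x‖ < ‖y‖) :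
    ‖y‖⁻¹ • x ∈ ball (0 : E) 1 := by
  have hy : 0 < ‖y‖ := (norm_nonneg x).trans_lt h
  rw [mem_ball_zero_iff, norm_smul, norm_inv, norm_norm, inv_mul_lt_one₀ hy]
  exact h

variable [MeasurableSpace E] [BorelSpace E]

theorem lintegral_ofReal_mul_min_norm_pow (μ : Measure E) {Φ : E → ℝ} (d : ℕ) :
    ∫⁻ y, ENNReal.ofReal (Φ y) * ENNReal.ofReal (min ‖y‖ 1 ^ d) ∂μ =
      (∫⁻ y in ball 0 1, ENNReal.ofReal (‖y‖ ^ d * Φ y) ∂μ) +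
        ∫⁻ y in (ball 0 1)ᶜ, ENNReal.ofReal (Φ y) ∂μ := by
  rw [← lintegral_add_compl _ measurableSet_ball]
  congr 1
  · refine setLIntegral_congr_fun measurableSet_ball fun y hy => ?_
    rw [min_eq_left (mem_ball_zero_iff.1 hy).le, ENNReal.ofReal_mul (by positivity), mul_comm]
  · refine setLIntegral_congr_fun measurableSet_ball.compl fun y hy => ?_
    rw [min_eq_right (not_lt.1 (mt mem_ball_zero_iff.2 hy)), one_pow, ENNReal.ofReal_one, mul_one]

variable [NormedSpace ℝ E]

theorem lintegral_ofReal_mul_measure_ball_min_le (μ : Measure E) [SFinite μ] {Φ : E → ℝ}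
    (hΦ : Measurable Φ) {f : E → ℝ} (hf : ∀ x ∈ ball (0 : E) 1, f x = 1) :
    ∫⁻ y, ENNReal.ofReal (Φ y) * μ (ball 0 (min ‖y‖ 1)) ∂μ ≤
      ∫⁻ x in ball 0 1, ∫⁻ y, ENNReal.ofReal (Φ y * f (‖y‖⁻¹ • x)) ∂μ ∂μ := by
  set G : E → E → ℝ≥0∞ := fun x y =>
    (ball 0 (min ‖y‖ 1)).indicator (fun _ => ENNReal.ofReal (Φ y)) x
  have hG : Measurable (Function.uncurry G) := by
    refine Measurable.indicator (by fun_prop) ?_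
    change MeasurableSet {p : E × E | dist p.1 0 < min ‖p.2‖ 1}
    exact measurableSet_lt (by fun_prop) (by fun_prop)
  have hG_le : ∀ x ∈ ball (0 : E) 1, ∀ y, G x y ≤ ENNReal.ofReal (Φ y * f (‖y‖⁻¹ • x)) := by
    intro x _ y
    by_cases hx : x ∈ ball (0 : E) (min ‖y‖ 1)
    · rw [mem_ball_zero_iff, lt_min_iff] at hx
      simp [G, hx, hf _ (inv_norm_smul_mem_ball_one hx.1)]
    · simp [G, hx]
  calc ∫⁻ y, ENNReal.ofReal (Φ y) * μ (ball 0 (min ‖y‖ 1)) ∂μ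
      = ∫⁻ y, ∫⁻ x in ball 0 1, G x y ∂μ ∂μ := by
        refine lintegral_congr fun y => ?_
        rw [lintegral_indicator_const measurableSet_ball, Measure.restrict_apply measurableSet_ball,
          Set.inter_eq_left.2 (ball_subset_ball (min_le_right _ _)), mul_comm]
    _ = ∫⁻ x in ball 0 1, ∫⁻ y, G x y ∂μ ∂μ := lintegral_lintegral_swap hG.aemeasurable |>.symm
    _ ≤ _ := setLIntegral_mono' measurableSet_ball fun x hx => lintegral_mono (hG_le x hx)

theorem lintegral_ball_add_lintegral_compl_mul_le [Nontrivial E] [FiniteDimensional ℝ E]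
    (μ : Measure E) [μ.IsAddHaarMeasure] {Φ : E → ℝ} (hΦ : Measurable Φ) {f : E → ℝ}
    (hf : ∀ x ∈ ball (0 : E) 1, f x = 1) :
    ((∫⁻ y in ball 0 1, ENNReal.ofReal (‖y‖ ^ Module.finrank ℝ E * Φ y) ∂μ) +
        ∫⁻ y in (ball 0 1)ᶜ, ENNReal.ofReal (Φ y) ∂μ) * μ (ball 0 1) ≤
      ∫⁻ x in ball 0 1, ∫⁻ y, ENNReal.ofReal (Φ y * f (‖y‖⁻¹ • x)) ∂μ ∂μ := by
  refine le_of_eq_of_le ?_ (lintegral_ofReal_mul_measure_ball_min_le μ hΦ hf)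
  simp_rw [Measure.addHaar_ball μ 0 (le_min (norm_nonneg _) zero_le_one), ← mul_assoc]
  rw [lintegral_mul_const' _ _ (measure_ball_lt_top (x := 0)).ne,
    lintegral_ofReal_mul_min_norm_pow]

theorem stmt0_general {n : ℕ} (hn : 0 < n) (Φ : EuclideanSpace ℝ (Fin n) → ℝ)
    (hΦm : Measurable Φ)
    (f : EuclideanSpace ℝ (Fin n) → ℝ)
    (hfone : ∀ x ∈ ball (0 : EuclideanSpace ℝ (Fin n)) 1, f x = 1)
    (hH : (∫⁻ x in ball (0 : EuclideanSpace ℝ (Fin n)) 1, ∫⁻ y, ENNReal.ofReal (Φ y * f (‖y‖⁻¹ • x))) < ⊤) :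
    (∫⁻ y in ball (0 : EuclideanSpace ℝ (Fin n)) 1, ENNReal.ofReal (‖y‖ ^ n * Φ y)) < ⊤ ∧
    (∫⁻ y in (ball (0 : EuclideanSpace ℝ (Fin n)) 1)ᶜ, ENNReal.ofReal (Φ y)) < ⊤ := by
  have : Nontrivial (EuclideanSpace ℝ (Fin n)) := by
    have : Nonempty (Fin n) := ⟨⟨0, hn⟩⟩
    infer_instance
  have h := lintegral_ball_add_lintegral_compl_mul_le volume hΦm hfone
  rw [finrank_euclideanSpace_fin] at h
  exact ENNReal.add_lt_top.1 <| ENNReal.lt_top_of_mul_ne_top_left (h.trans_lt hH).ne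
    (measure_ball_pos volume 0 one_pos).ne'

theorem stmt0 {n : ℕ} (hn : 0 < n) (Φ : EuclideanSpace ℝ (Fin n) → ℝ)
    (hΦm : Measurable Φ) (hΦnn : ∀ y, 0 ≤ Φ y)
    (f : EuclideanSpace ℝ (Fin n) → ℝ) (hfc : Continuous f) (hfi : Integrable f)
    (hfb : ∃ C, ∀ x, |f x| ≤ C) (hfnn : ∀ x, 0 ≤ f x)
    (hfone : ∀ x ∈ ball (0 : EuclideanSpace ℝ (Fin n)) 1, f x = 1)
    (hH : (∫⁻ x in ball (0 : EuclideanSpace ℝ (Fin n)) 1, ∫⁻ y, ENNReal.ofReal (Φ y * f (‖y‖⁻¹ • x))) < ⊤) :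
    (∫⁻ y in ball (0 : EuclideanSpace ℝ (Fin n)) 1, ENNReal.ofReal (‖y‖ ^ n * Φ y)) < ⊤ ∧
    (∫⁻ y in (ball (0 : EuclideanSpace ℝ (Fin n)) 1)ᶜ, ENNReal.ofReal (Φ y)) < ⊤ :=
  stmt0_general hn Φ hΦm f hfone hH
end
end

section
/- Let Φ : ℝⁿ → [0,∞) be measurable with ∫_{B(0,1)} |y|ⁿ Φ(y) dy < ∞ and ∫_{B(0,1)ᶜ} Φ(y) dy < ∞. Then for every Schwartz function f, the function H_Φ f is integrable over the unit ball: ∫_{B(0,1)} |H_Φ f(x)| dx ≤ ∫_{B(0,1)} |y|ⁿ Φ(y) dy · ‖f‖_{L¹} + |B(0,1)| · ‖f‖_{L^∞} · ∫_{B(0,1)ᶜ} Φ(y) dy < ∞. -/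
/-! By Tonelli, `∫_B |H_Φ f| ≤ ∫ Φ(y) (∫_B |f(x/|y|)| dx) dy`. The substitution `x ↦ x/|y|`
bounds the inner integral by `|y|ⁿ ‖f‖₁`, which is used for `|y| < 1`; for `|y| ≥ 1` it is
bounded by `|B| ‖f‖_∞` instead. -/

open MeasureTheory Metric Complex
open scoped ENNReal NNReal RealInnerProductSpace FourierTransform

noncomputable section

section HaarScaling

variable {E F : Type*} [NormedAddCommGroup E] [NormedSpace ℝ E] [MeasurableSpace E] [BorelSpace E]
  [FiniteDimensional ℝ E] [NormedAddCommGroup F] (μ : Measure E) [μ.IsAddHaarMeasure]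

lemma lintegral_comp_smul (g : E → ℝ≥0∞) {c : ℝ} (hc : c ≠ 0) :
    ∫⁻ x, g (c • x) ∂μ = ENNReal.ofReal |(c ^ Module.finrank ℝ E)⁻¹| * ∫⁻ x, g x ∂μ := by
  rw [← smul_eq_mul, ← lintegral_smul_measure, ← Measure.map_addHaar_smul μ hc]
  exact (lintegral_map_equiv g
    (Homeomorph.smul (isUnit_iff_ne_zero.2 hc).unit).toMeasurableEquiv).symm

lemma setLIntegral_enorm_comp_smul_le_eLpNorm_one (f : E → F) (s : Set E) {c : ℝ} (hc : c ≠ 0) :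
    ∫⁻ x in s, ‖f (c • x)‖ₑ ∂μ ≤
      ENNReal.ofReal |(c ^ Module.finrank ℝ E)⁻¹| * eLpNorm f 1 μ := by
  rw [eLpNorm_one_eq_lintegral_enorm, ← lintegral_comp_smul μ _ hc]
  exact setLIntegral_le_lintegral _ _

lemma setLIntegral_enorm_comp_smul_le_eLpNorm_top (f : E → F) (s : Set E) {c : ℝ} (hc : c ≠ 0) :
    ∫⁻ x in s, ‖f (c • x)‖ₑ ∂μ ≤ μ s * eLpNorm f ⊤ μ := by
  have hbound : ∀ᵐ x ∂μ, ‖f (c • x)‖ₑ ≤ eLpNorm f ⊤ μ :=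
    (Measure.quasiMeasurePreserving_smul μ hc).ae (ae_le_eLpNormEssSup (f := f))
  calc ∫⁻ x in s, ‖f (c • x)‖ₑ ∂μ ≤ ∫⁻ _ in s, eLpNorm f ⊤ μ ∂μ :=
        lintegral_mono_ae (ae_restrict_of_ae hbound)
    _ = μ s * eLpNorm f ⊤ μ := by rw [setLIntegral_const, mul_comm]

end HaarScaling

lemma enorm_integral_ofReal_mul_le {α : Type*} [MeasurableSpace α] {μ : Measure α}
    {Φ : α → ℝ} (hΦ : ∀ y, 0 ≤ Φ y) (g : α → ℂ) :
    ‖∫ y, (Φ y : ℂ) * g y ∂μ‖ₑ ≤ ∫⁻ y, ENNReal.ofReal (Φ y) * ‖g y‖ₑ ∂μ := by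
  refine (enorm_integral_le_lintegral_enorm _).trans_eq (lintegral_congr fun y => ?_)
  rw [enorm_mul, ← ofReal_norm, Complex.norm_real, Real.norm_of_nonneg (hΦ y)]

section Hausdorff

variable {n : ℕ} {Φ : EuclideanSpace ℝ (Fin n) → ℝ}

lemma setLIntegral_enorm_hausdorffOp_le (hΦm : Measurable Φ) (hΦnn : ∀ y, 0 ≤ Φ y)
    {f : EuclideanSpace ℝ (Fin n) → ℂ} (hf : Measurable f) (s : Set (EuclideanSpace ℝ (Fin n))) :
    ∫⁻ x in s, ‖hausdorffOp Φ f x‖ₑ ≤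
      ∫⁻ y, ENNReal.ofReal (Φ y) * ∫⁻ x in s, ‖f (‖y‖⁻¹ • x)‖ₑ := by
  have hmeas : Measurable fun p : EuclideanSpace ℝ (Fin n) × EuclideanSpace ℝ (Fin n) =>
      ENNReal.ofReal (Φ p.2) * ‖f (‖p.2‖⁻¹ • p.1)‖ₑ :=
    (hΦm.comp measurable_snd).ennreal_ofReal.mul
      (hf.comp (measurable_snd.norm.inv.smul measurable_fst)).enorm
  calc ∫⁻ x in s, ‖hausdorffOp Φ f x‖ₑ
      ≤ ∫⁻ x in s, ∫⁻ y, ENNReal.ofReal (Φ y) * ‖f (‖y‖⁻¹ • x)‖ₑ :=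
        lintegral_mono fun x => enorm_integral_ofReal_mul_le hΦnn _
    _ = ∫⁻ y, ENNReal.ofReal (Φ y) * ∫⁻ x in s, ‖f (‖y‖⁻¹ • x)‖ₑ := by
        rw [lintegral_lintegral_swap hmeas.aemeasurable]
        exact lintegral_congr fun y =>
          lintegral_const_mul _ (hf.comp (measurable_const_smul _)).enorm

lemma setLIntegral_enorm_hausdorffOp_le_eLpNorm (hn : 0 < n) (hΦm : Measurable Φ)
    (hΦnn : ∀ y, 0 ≤ Φ y) {f : EuclideanSpace ℝ (Fin n) → ℂ} (hf : Measurable f)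
    (s t : Set (EuclideanSpace ℝ (Fin n))) (ht : MeasurableSet t) :
    ∫⁻ x in s, ‖hausdorffOp Φ f x‖ₑ ≤
      (∫⁻ y in t, ENNReal.ofReal (‖y‖ ^ n * Φ y)) * eLpNorm f 1 volume +
        volume s * eLpNorm f ⊤ volume * ∫⁻ y in tᶜ, ENNReal.ofReal (Φ y) := by
  have : Nontrivial (EuclideanSpace ℝ (Fin n)) :=
    Module.nontrivial_of_finrank_pos (R := ℝ) (by rwa [finrank_euclideanSpace_fin])
  -- at `y = 0` the rescaling `‖y‖⁻¹ • x` degenerates to `0`; this point is null once `n > 0`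
  have hne : ∀ᵐ y : EuclideanSpace ℝ (Fin n), y ≠ 0 := by simp [ae_iff, measure_singleton]
  have hnear : ∀ᵐ y ∂volume.restrict t, ENNReal.ofReal (Φ y) * ∫⁻ x in s, ‖f (‖y‖⁻¹ • x)‖ₑ ≤
      ENNReal.ofReal (‖y‖ ^ n * Φ y) * eLpNorm f 1 volume := by
    filter_upwards [ae_restrict_of_ae hne] with y hy
    have hc : ‖y‖⁻¹ ≠ 0 := inv_ne_zero (norm_ne_zero_iff.2 hy)
    calc ENNReal.ofReal (Φ y) * ∫⁻ x in s, ‖f (‖y‖⁻¹ • x)‖ₑ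
        ≤ ENNReal.ofReal (Φ y) * (ENNReal.ofReal (‖y‖ ^ n) * eLpNorm f 1 volume) := by
          gcongr
          simpa [finrank_euclideanSpace_fin, abs_of_nonneg] using
            setLIntegral_enorm_comp_smul_le_eLpNorm_one volume f s hc
      _ = ENNReal.ofReal (‖y‖ ^ n * Φ y) * eLpNorm f 1 volume := by
          rw [ENNReal.ofReal_mul (by positivity), ← mul_assoc, mul_comm (ENNReal.ofReal (Φ y))]
  have hfar : ∀ᵐ y ∂volume.restrict tᶜ, ENNReal.ofReal (Φ y) * ∫⁻ x in s, ‖f (‖y‖⁻¹ • x)‖ₑ ≤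
      ENNReal.ofReal (Φ y) * (volume s * eLpNorm f ⊤ volume) := by
    filter_upwards [ae_restrict_of_ae hne] with y hy
    gcongr
    exact setLIntegral_enorm_comp_smul_le_eLpNorm_top volume f s
      (inv_ne_zero (norm_ne_zero_iff.2 hy))
  calc ∫⁻ x in s, ‖hausdorffOp Φ f x‖ₑ
      ≤ ∫⁻ y, ENNReal.ofReal (Φ y) * ∫⁻ x in s, ‖f (‖y‖⁻¹ • x)‖ₑ :=
        setLIntegral_enorm_hausdorffOp_le hΦm hΦnn hf s
    _ = (∫⁻ y in t, ENNReal.ofReal (Φ y) * ∫⁻ x in s, ‖f (‖y‖⁻¹ • x)‖ₑ) +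
          ∫⁻ y in tᶜ, ENNReal.ofReal (Φ y) * ∫⁻ x in s, ‖f (‖y‖⁻¹ • x)‖ₑ :=
        (lintegral_add_compl _ ht).symm
    _ ≤ (∫⁻ y in t, ENNReal.ofReal (‖y‖ ^ n * Φ y) * eLpNorm f 1 volume) +
          ∫⁻ y in tᶜ, ENNReal.ofReal (Φ y) * (volume s * eLpNorm f ⊤ volume) :=
        add_le_add (lintegral_mono_ae hnear) (lintegral_mono_ae hfar)
    _ = _ := by
        rw [lintegral_mul_const _ (by fun_prop), lintegral_mul_const _ hΦm.ennreal_ofReal,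
          mul_comm _ (volume s * _)]

end Hausdorff

theorem stmt2 {n : ℕ} (hn : 0 < n) (Φ : EuclideanSpace ℝ (Fin n) → ℝ)
    (hΦm : Measurable Φ) (hΦnn : ∀ y, 0 ≤ Φ y)
    (hb1 : (∫⁻ y in ball (0 : EuclideanSpace ℝ (Fin n)) 1, ENNReal.ofReal (‖y‖ ^ n * Φ y)) < ⊤)
    (hb2 : (∫⁻ y in (ball (0 : EuclideanSpace ℝ (Fin n)) 1)ᶜ, ENNReal.ofReal (Φ y)) < ⊤)
    (f : SchwartzMap (EuclideanSpace ℝ (Fin n)) ℂ) :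
    (∫⁻ x in ball (0 : EuclideanSpace ℝ (Fin n)) 1, (‖hausdorffOp Φ (⇑f) x‖₊ : ℝ≥0∞)) ≤
        (∫⁻ y in ball (0 : EuclideanSpace ℝ (Fin n)) 1, ENNReal.ofReal (‖y‖ ^ n * Φ y)) * eLpNorm (⇑f) 1 volume +
          volume (ball (0 : EuclideanSpace ℝ (Fin n)) 1) * eLpNorm (⇑f) ⊤ volume *
            ∫⁻ y in (ball (0 : EuclideanSpace ℝ (Fin n)) 1)ᶜ, ENNReal.ofReal (Φ y) ∧
      (∫⁻ x in ball (0 : EuclideanSpace ℝ (Fin n)) 1, (‖hausdorffOp Φ (⇑f) x‖₊ : ℝ≥0∞)) < ⊤ := by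
  have hbound := setLIntegral_enorm_hausdorffOp_le_eLpNorm hn hΦm hΦnn
    f.continuous.measurable (ball 0 1) (ball 0 1) measurableSet_ball
  have hL1 : eLpNorm (⇑f) 1 volume < ⊤ := (memLp_one_iff_integrable.2 f.integrable).eLpNorm_lt_top
  have hLinf : eLpNorm (⇑f) ⊤ volume < ⊤ := (f.memLp ⊤ volume).eLpNorm_lt_top
  refine ⟨hbound, hbound.trans_lt ?_⟩
  exact ENNReal.add_lt_top.2 ⟨ENNReal.mul_lt_top hb1 hL1,
    ENNReal.mul_lt_top (ENNReal.mul_lt_top measure_ball_lt_top hLinf) hb2⟩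
end
end

section
/- Let Φ : ℝⁿ → [0,∞) be measurable with ∫ Φ(y) min{1,|y|ⁿ} dy < ∞ and let f, g be Schwartz functions. Then the pairing identity ⟨𝓕(H_Φ f), g⟩ = ⟨H̃_Φ(𝓕 f), g⟩ holds, where H̃_Φ h(x) = ∫_{ℝⁿ} Φ(y) |y|ⁿ h(|y| x) dy; i.e., formally 𝓕(H_Φ f) = H̃_Φ(𝓕 f) as tempered distributions. -/
open MeasureTheory Metric Complex
open scoped ENNReal NNReal RealInnerProductSpace FourierTransform

noncomputable section

/-!
Unfolding `H_Φ` and exchanging the order of integration turns the left side into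
`∫ Φ(y) ⟨f(·/|y|), 𝓕 g⟩ dy`. For `y ≠ 0` the Fourier transform is self-adjoint on Schwartz
functions and maps the dilate `f(·/c)` to `cⁿ 𝓕f(c ·)`, so the inner pairing equals
`|y|ⁿ ⟨𝓕 f(|y| ·), g⟩`; exchanging the integrals back gives the right side.
Both exchanges are justified by `∫ |u(x/c)| |v(x)| dx ≤ C min(1, cⁿ)` for Schwartz `u, v`
(bound `u` by its sup norm and `v` by its `L¹` norm, or the reverse after the substitution
`x ↦ c x`), which is integrable against `Φ`. In dimension `0` both operators are multiplication
by `∫ Φ`.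
-/

open Module Function
open scoped SchwartzMap

theorem MeasureTheory.integrable_uncurry_of_integral_norm_le {α β E : Type*}
    [MeasurableSpace α] [MeasurableSpace β] [NormedAddCommGroup E]
    {μ : Measure α} {ν : Measure β} [SFinite μ] [SFinite ν] {F : α → β → E} {w : α → ℝ}
    (hF : AEStronglyMeasurable (uncurry F) (μ.prod ν)) (hw : Integrable w μ)
    (hF_int : ∀ᵐ a ∂μ, Integrable (F a) ν) (hF_le : ∀ᵐ a ∂μ, ∫ b, ‖F a b‖ ∂ν ≤ w a) :
    Integrable (uncurry F) (μ.prod ν) := by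
  refine (integrable_prod_iff hF).2 ⟨hF_int, hw.mono' hF.norm.integral_prod_right' ?_⟩
  filter_upwards [hF_le] with a ha
  rwa [Real.norm_of_nonneg (integral_nonneg fun _ ↦ norm_nonneg _)]

section Dilation

variable {V : Type*} [NormedAddCommGroup V] [InnerProductSpace ℝ V] [FiniteDimensional ℝ V]
  [MeasurableSpace V] [BorelSpace V]

theorem Real.fourier_comp_inv_smul {E : Type*} [NormedAddCommGroup E] [NormedSpace ℂ E]
    (f : V → E) {c : ℝ} (hc : 0 < c) (ξ : V) :
    𝓕 (fun x ↦ f (c⁻¹ • x)) ξ = c ^ finrank ℝ V • 𝓕 f (c • ξ) := by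
  rw [Real.fourier_eq, Real.fourier_eq,
    ← Measure.integral_comp_inv_smul_of_nonneg volume (fun v ↦ 𝐞 (-⟪v, c • ξ⟫) • f v) hc.le]
  simp_rw [inner_smul_left, inner_smul_right, RCLike.conj_to_real, inv_mul_cancel_left₀ hc.ne']

theorem SchwartzMap.integral_comp_inv_smul_mul_fourier (f g : 𝓢(V, ℂ)) {c : ℝ} (hc : 0 < c) :
    ∫ x, f (c⁻¹ • x) * 𝓕 (⇑g) x = ((c ^ finrank ℝ V : ℝ) : ℂ) * ∫ ξ, 𝓕 (⇑f) (c • ξ) * g ξ := by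
  let fc : 𝓢(V, ℂ) := compCLMOfContinuousLinearEquiv ℂ
    (ContinuousLinearEquiv.smulLeft (Units.mk0 c⁻¹ (inv_ne_zero hc.ne'))) f
  have hfc : ∀ x, fc x = f (c⁻¹ • x) := fun _ ↦ rfl
  calc ∫ x, f (c⁻¹ • x) * 𝓕 (⇑g) x = ∫ ξ, 𝓕 (⇑fc) ξ * g ξ := by
        simp_rw [← hfc]; exact (integral_fourier_mul_eq fc g).symm
    _ = _ := by
        simp_rw [← integral_const_mul, ← mul_assoc, ← Complex.real_smul,
          ← Real.fourier_comp_inv_smul _ hc, ← hfc]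


theorem SchwartzMap.exists_integral_norm_comp_inv_smul_mul_le (u v : 𝓢(V, ℂ)) :
    ∃ C, ∀ c : ℝ, 0 < c → ∫ x, ‖u (c⁻¹ • x)‖ * ‖v x‖ ≤ C * min 1 (c ^ finrank ℝ V) := by
  set A := SchwartzMap.seminorm ℝ 0 0 u
  set B := SchwartzMap.seminorm ℝ 0 0 v
  refine ⟨max (A * ∫ x, ‖v x‖) (B * ∫ x, ‖u x‖), fun c hc ↦ ?_⟩
  have hnonneg : ∀ x, 0 ≤ ‖u (c⁻¹ • x)‖ * ‖v x‖ := fun _ ↦ by positivity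
  have h_sup_u : ∫ x, ‖u (c⁻¹ • x)‖ * ‖v x‖ ≤ A * ∫ x, ‖v x‖ := by
    rw [← integral_const_mul]
    refine integral_mono_of_nonneg (.of_forall hnonneg) (v.integrable.norm.const_mul A)
      (.of_forall fun x ↦ ?_)
    exact mul_le_mul_of_nonneg_right (norm_le_seminorm ℝ u _) (norm_nonneg _)
  have h_sup_v : ∫ x, ‖u (c⁻¹ • x)‖ * ‖v x‖ ≤ B * (∫ x, ‖u x‖) * c ^ finrank ℝ V := by
    calc ∫ x, ‖u (c⁻¹ • x)‖ * ‖v x‖ ≤ ∫ x, ‖u (c⁻¹ • x)‖ * B :=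
          integral_mono_of_nonneg (.of_forall hnonneg)
            ((u.integrable.norm.comp_smul (inv_ne_zero hc.ne')).mul_const B)
            (.of_forall fun x ↦ mul_le_mul_of_nonneg_left (norm_le_seminorm ℝ v _)
              (norm_nonneg _))
      _ = B * (∫ x, ‖u x‖) * c ^ finrank ℝ V := by
          rw [integral_mul_const, Measure.integral_comp_inv_smul_of_nonneg volume
            (fun x ↦ ‖u x‖) hc.le, smul_eq_mul]
          ring
  rcases le_total (c ^ finrank ℝ V) 1 with h | h
  · rw [min_eq_right h]
    exact h_sup_v.trans (mul_le_mul_of_nonneg_right (le_max_right _ _) (by positivity))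
  · rw [min_eq_left h, mul_one]
    exact h_sup_u.trans (le_max_left _ _)

variable [Nontrivial V] {Φ : V → ℝ}

theorem integrable_uncurry_hausdorffOp_mul (hΦ : Measurable Φ)
    (hw : Integrable (fun y ↦ Φ y * min 1 (‖y‖ ^ finrank ℝ V))) (u v : 𝓢(V, ℂ)) :
    Integrable (uncurry fun y x ↦ (Φ y : ℂ) * u (‖y‖⁻¹ • x) * v x) (volume.prod volume) := by
  obtain ⟨C, hC⟩ := u.exists_integral_norm_comp_inv_smul_mul_le v
  refine integrable_uncurry_of_integral_norm_le
    (by fun_prop : Measurable _).aestronglyMeasurable (hw.norm.const_mul C) ?_ ?_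
  all_goals filter_upwards [Measure.ae_ne volume 0] with y hy
  · exact ((u.integrable.comp_smul (inv_ne_zero (norm_ne_zero_iff.2 hy))).const_mul _).mul_bdd
      v.continuous.aestronglyMeasurable (.of_forall (SchwartzMap.norm_le_seminorm ℝ v))
  · simp_rw [norm_mul, mul_assoc, integral_const_mul, Complex.norm_real]
    calc ‖Φ y‖ * ∫ x, ‖u (‖y‖⁻¹ • x)‖ * ‖v x‖ ≤ ‖Φ y‖ * (C * min 1 (‖y‖ ^ finrank ℝ V)) :=
          mul_le_mul_of_nonneg_left (hC _ (norm_pos_iff.2 hy)) (norm_nonneg _)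
      _ = C * (‖Φ y‖ * ‖min 1 (‖y‖ ^ finrank ℝ V)‖) := by
          rw [Real.norm_of_nonneg (r := min _ _) (by positivity)]; ring

theorem integrable_uncurry_hausdorffAdj_mul (hΦ : Measurable Φ)
    (hw : Integrable (fun y ↦ Φ y * min 1 (‖y‖ ^ finrank ℝ V))) (u v : 𝓢(V, ℂ)) :
    Integrable (uncurry fun y ξ ↦ (Φ y : ℂ) * ((‖y‖ ^ finrank ℝ V : ℝ) : ℂ) * u (‖y‖ • ξ) * v ξ)
      (volume.prod volume) := by
  obtain ⟨C, hC⟩ := v.exists_integral_norm_comp_inv_smul_mul_le u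
  refine integrable_uncurry_of_integral_norm_le
    (by fun_prop : Measurable _).aestronglyMeasurable (hw.norm.const_mul C) ?_ ?_
  all_goals filter_upwards [Measure.ae_ne volume 0] with y hy
  · exact ((u.integrable.comp_smul (norm_ne_zero_iff.2 hy)).const_mul _).mul_bdd
      v.continuous.aestronglyMeasurable (.of_forall (SchwartzMap.norm_le_seminorm ℝ v))
  · have hc : 0 < ‖y‖ := norm_pos_iff.2 hy
    have h_dilate : ‖y‖ ^ finrank ℝ V * ∫ ξ, ‖u (‖y‖ • ξ)‖ * ‖v ξ‖ =
        ∫ x, ‖v (‖y‖⁻¹ • x)‖ * ‖u x‖ := by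
      rw [← smul_eq_mul, ← Measure.integral_comp_inv_smul_of_nonneg volume _ hc.le]
      simp_rw [smul_inv_smul₀ hc.ne', mul_comm]
    simp_rw [norm_mul, mul_assoc, integral_const_mul, Complex.norm_real,
      Real.norm_of_nonneg (pow_nonneg hc.le _), h_dilate]
    calc ‖Φ y‖ * ∫ x, ‖v (‖y‖⁻¹ • x)‖ * ‖u x‖ ≤ ‖Φ y‖ * (C * min 1 (‖y‖ ^ finrank ℝ V)) :=
          mul_le_mul_of_nonneg_left (hC _ hc) (norm_nonneg _)
      _ = C * (‖Φ y‖ * ‖min 1 (‖y‖ ^ finrank ℝ V)‖) := by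
          rw [Real.norm_of_nonneg (r := min _ _) (by positivity)]; ring

end Dilation

theorem hausdorffOp_fin_zero (Φ : EuclideanSpace ℝ (Fin 0) → ℝ) (f : EuclideanSpace ℝ (Fin 0) → ℂ)
    (x : EuclideanSpace ℝ (Fin 0)) : hausdorffOp Φ f x = (∫ y, (Φ y : ℂ)) * f x := by
  rw [hausdorffOp, ← integral_mul_const]
  congr with y
  rw [Subsingleton.elim (‖y‖⁻¹ • x) x]

theorem hausdorffAdj_fin_zero (Φ : EuclideanSpace ℝ (Fin 0) → ℝ) (f : EuclideanSpace ℝ (Fin 0) → ℂ)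
    (x : EuclideanSpace ℝ (Fin 0)) : hausdorffAdj Φ f x = (∫ y, (Φ y : ℂ)) * f x := by
  rw [hausdorffAdj, ← integral_mul_const]
  congr with y
  rw [Subsingleton.elim (‖y‖ • x) x, pow_zero, Complex.ofReal_one, mul_one]

theorem stmt4 {n : ℕ} (Φ : EuclideanSpace ℝ (Fin n) → ℝ)
    (hΦm : Measurable Φ) (hΦnn : ∀ y, 0 ≤ Φ y)
    (hfin : (∫⁻ y, ENNReal.ofReal (Φ y * min 1 (‖y‖ ^ n))) < ⊤)
    (f g : SchwartzMap (EuclideanSpace ℝ (Fin n)) ℂ) :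
    ∫ x, hausdorffOp Φ (⇑f) x * 𝓕 (⇑g) x = ∫ x, hausdorffAdj Φ (𝓕 (⇑f)) x * g x := by
  rcases n.eq_zero_or_pos with rfl | hn
  · simp_rw [hausdorffOp_fin_zero, hausdorffAdj_fin_zero, mul_assoc, integral_const_mul,
      ← SchwartzMap.fourier_coe, SchwartzMap.integral_fourier_mul_eq]
  have : Nontrivial (EuclideanSpace ℝ (Fin n)) :=
    Module.nontrivial_of_finrank_pos (R := ℝ) (by rwa [finrank_euclideanSpace_fin])
  have hw : Integrable fun y ↦ Φ y * min 1 (‖y‖ ^ finrank ℝ (EuclideanSpace ℝ (Fin n))) := by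
    rw [finrank_euclideanSpace_fin]
    exact ⟨(by fun_prop : Measurable _).aestronglyMeasurable, (hasFiniteIntegral_iff_ofReal
      (.of_forall fun y ↦ mul_nonneg (hΦnn y) (by positivity))).2 hfin⟩
  have hP := integrable_uncurry_hausdorffOp_mul hΦm hw f (𝓕 g)
  have hQ := integrable_uncurry_hausdorffAdj_mul hΦm hw (𝓕 f) g
  simp only [finrank_euclideanSpace_fin] at hQ
  calc ∫ x, hausdorffOp Φ f x * 𝓕 (⇑g) x
      = ∫ x, ∫ y, (Φ y : ℂ) * f (‖y‖⁻¹ • x) * 𝓕 (⇑g) x := by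
        simp only [hausdorffOp, ← integral_mul_const]
    _ = ∫ y, ∫ x, (Φ y : ℂ) * f (‖y‖⁻¹ • x) * 𝓕 (⇑g) x := (integral_integral_swap hP).symm
    _ = ∫ y, ∫ ξ, (Φ y : ℂ) * ((‖y‖ ^ n : ℝ) : ℂ) * 𝓕 (⇑f) (‖y‖ • ξ) * g ξ := by
        refine integral_congr_ae ?_
        filter_upwards [Measure.ae_ne volume 0] with y hy
        have := SchwartzMap.integral_comp_inv_smul_mul_fourier f g (norm_pos_iff.2 hy)
        rw [finrank_euclideanSpace_fin] at this
        simp_rw [mul_assoc, integral_const_mul, this]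
    _ = ∫ ξ, ∫ y, (Φ y : ℂ) * ((‖y‖ ^ n : ℝ) : ℂ) * 𝓕 (⇑f) (‖y‖ • ξ) * g ξ :=
        integral_integral_swap hQ
    _ = ∫ x, hausdorffAdj Φ (𝓕 (⇑f)) x * g x := by
        simp only [hausdorffAdj, ← integral_mul_const]
end
end

section
/- Let Φ : ℝⁿ → [0,∞) be measurable with ∫ Φ(y) min{1,|y|ⁿ} dy < ∞. Then the map f ↦ H_Φ f, viewed from Schwartz functions to tempered distributions via ⟨H_Φ f, g⟩ = ∫ H_Φ f(x) g(x) dx, is continuous: if g_l → 0 in the Schwartz topology then ⟨H_Φ f, g_l⟩ → 0 for each fixed Schwartz f, with the quantitative bound |⟨H_Φ f, g⟩| ≤ (‖f‖_{L¹}+‖f‖_{L^∞})(‖g‖_{L¹}+‖g‖_{L^∞}) ∫ Φ(y) min{1,|y|ⁿ} dy. -/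
open MeasureTheory Metric Complex
open scoped ENNReal NNReal RealInnerProductSpace FourierTransform

noncomputable section

/-! By Tonelli, `|⟨H_Φ f, g⟩| ≤ ∫ Φ(y) ∫ |f(x/|y|)| |g(x)| dx dy`. The inner integral is at most
`‖f‖_∞ ‖g‖₁`, and, after the substitution `x ↦ |y| x`, at most `|y|ⁿ ‖f‖₁ ‖g‖_∞`; so it is bounded
by `(‖f‖₁ + ‖f‖_∞)(‖g‖₁ + ‖g‖_∞) min{1, |y|ⁿ}`. Continuity follows because finitely many Schwartz
seminorms control `‖g‖₁` and `‖g‖_∞`. -/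

open Filter Topology
open scoped SchwartzMap

theorem Continuous.enorm_le_eLpNormEssSup {α ε : Type*} [TopologicalSpace α] [MeasurableSpace α]
    {μ : Measure α} [μ.IsOpenPosMeasure] [TopologicalSpace ε] [ContinuousENorm ε]
    {f : α → ε} (hf : Continuous f) (x : α) : ‖f x‖ₑ ≤ eLpNormEssSup f μ := by
  by_contra! hx
  have hopen : IsOpen {y | eLpNormEssSup f μ < ‖f y‖ₑ} := isOpen_lt continuous_const hf.enorm
  have hnull : μ {y | eLpNormEssSup f μ < ‖f y‖ₑ} = 0 := by
    simpa only [ae_iff, not_le] using ae_le_eLpNormEssSup (f := f) (μ := μ)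
  exact hopen.measure_ne_zero μ ⟨x, hx⟩ hnull

theorem tendsto_zero_of_enorm_le_const_mul {ι E : Type*} [NormedAddCommGroup E] {l : Filter ι}
    {u : ι → E} {a : ι → ℝ≥0∞} {C : ℝ≥0∞} (hC : C ≠ ∞) (ha : Tendsto a l (𝓝 0))
    (hu : ∀ i, ‖u i‖ₑ ≤ C * a i) : Tendsto u l (𝓝 0) := by
  have hCa : Tendsto (fun i => C * a i) l (𝓝 0) := by
    simpa using ENNReal.Tendsto.const_mul ha (Or.inr hC)
  exact tendsto_zero_iff_enorm_tendsto_zero.2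
    (tendsto_of_tendsto_of_tendsto_of_le_of_le tendsto_const_nhds hCa (fun _ => bot_le) hu)

theorem SchwartzMap.tendsto_eLpNorm_zero {ι E F : Type*} [NormedAddCommGroup E] [NormedSpace ℝ E]
    [NormedAddCommGroup F] [NormedSpace ℝ F] [MeasurableSpace E] [OpensMeasurableSpace E]
    (p : ℝ≥0∞) (μ : Measure E) [μ.HasTemperateGrowth] {l : Filter ι} {G : ι → 𝓢(E, F)}
    (hG : Tendsto G l (𝓝 0)) : Tendsto (fun i => eLpNorm (G i) p μ) l (𝓝 0) := by
  obtain ⟨k, C, hC⟩ := SchwartzMap.eLpNorm_le_seminorm ℝ F p μ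
  set q := (Finset.Iic (k, 0)).sup (schwartzSeminormFamily ℝ E F)
  have hq : Tendsto (fun i => q (G i)) l (𝓝 0) := by
    simpa [q, Function.comp_def] using
      (((schwartz_withSeminorms ℝ E F).finset_sups.continuous_seminorm _).tendsto 0).comp hG
  have hCq : Tendsto (fun i => (C : ℝ≥0∞) * ENNReal.ofReal (q (G i))) l (𝓝 0) := by
    simpa using ENNReal.Tendsto.const_mul (ENNReal.tendsto_ofReal hq) (Or.inr ENNReal.coe_ne_top)
  exact tendsto_of_tendsto_of_tendsto_of_le_of_le tendsto_const_nhds hCq (fun _ => bot_le)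
    fun i => hC (G i)

theorem lintegral_enorm_comp_smul_mul_le {E F : Type*} [NormedAddCommGroup E] [NormedSpace ℝ E]
    [MeasurableSpace E] {μ : Measure E} [μ.IsOpenPosMeasure] [NormedAddCommGroup F] {f g : E → F}
    (hf : Continuous f) (hg : AEStronglyMeasurable g μ) (R : ℝ) :
    ∫⁻ x, ‖f (R • x)‖ₑ * ‖g x‖ₑ ∂μ ≤ eLpNorm f ∞ μ * eLpNorm g 1 μ := by
  calc ∫⁻ x, ‖f (R • x)‖ₑ * ‖g x‖ₑ ∂μ ≤ ∫⁻ x, eLpNormEssSup f μ * ‖g x‖ₑ ∂μ :=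
        lintegral_mono fun x => mul_le_mul_left (hf.enorm_le_eLpNormEssSup _) _
    _ = eLpNorm f ∞ μ * eLpNorm g 1 μ := by
        rw [lintegral_const_mul'' _ hg.enorm, eLpNorm_exponent_top, eLpNorm_one_eq_lintegral_enorm]

section HaarScaling

variable {E F : Type*} [NormedAddCommGroup E] [NormedSpace ℝ E] [MeasurableSpace E] [BorelSpace E]
  [FiniteDimensional ℝ E] (μ : Measure E) [μ.IsAddHaarMeasure] [NormedAddCommGroup F]

theorem lintegral_comp_inv_smul_of_pos (f : E → ℝ≥0∞) {R : ℝ} (hR : 0 < R) :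
    ∫⁻ x, f (R⁻¹ • x) ∂μ = ENNReal.ofReal (R ^ Module.finrank ℝ E) * ∫⁻ x, f x ∂μ := by
  have hR' : R⁻¹ ≠ 0 := inv_ne_zero hR.ne'
  calc ∫⁻ x, f (R⁻¹ • x) ∂μ = ∫⁻ y, f y ∂(μ.map (R⁻¹ • ·)) :=
        (lintegral_map_equiv f
          (Homeomorph.smul (isUnit_iff_ne_zero.2 hR').unit).toMeasurableEquiv).symm
    _ = _ := by
        rw [Measure.map_addHaar_smul μ hR', lintegral_smul_measure, inv_pow, inv_inv,
          abs_of_pos (pow_pos hR _), smul_eq_mul]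

variable {μ}

theorem lintegral_enorm_comp_inv_smul_mul_le {f g : E → F} (hf : Continuous f) {R : ℝ}
    (hR : 0 < R) :
    ∫⁻ x, ‖f (R⁻¹ • x)‖ₑ * ‖g x‖ₑ ∂μ ≤
      ENNReal.ofReal (R ^ Module.finrank ℝ E) * eLpNorm f 1 μ * eLpNorm g ∞ μ := by
  calc ∫⁻ x, ‖f (R⁻¹ • x)‖ₑ * ‖g x‖ₑ ∂μ ≤ ∫⁻ x, ‖f (R⁻¹ • x)‖ₑ * eLpNormEssSup g μ ∂μ :=
        lintegral_mono_ae (ae_le_eLpNormEssSup.mono fun x hx => mul_le_mul_right hx _)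
    _ = ENNReal.ofReal (R ^ Module.finrank ℝ E) * eLpNorm f 1 μ * eLpNorm g ∞ μ := by
        rw [lintegral_mul_const'' _ (by fun_prop : AEMeasurable (fun x => ‖f (R⁻¹ • x)‖ₑ) μ),
          lintegral_comp_inv_smul_of_pos μ (fun y => ‖f y‖ₑ) hR, eLpNorm_exponent_top,
          eLpNorm_one_eq_lintegral_enorm]

/-- At `R = 0` the junk value `0⁻¹ = 0` makes `x ↦ f (R⁻¹ • x)` constant, whence the
alternative `finrank ℝ E = 0`. -/
theorem lintegral_enorm_comp_inv_smul_mul_le_min {f g : E → F} (hf : Continuous f)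
    (hg : AEStronglyMeasurable g μ) {R : ℝ} (hR : 0 < R ∨ Module.finrank ℝ E = 0) :
    ∫⁻ x, ‖f (R⁻¹ • x)‖ₑ * ‖g x‖ₑ ∂μ ≤
      (eLpNorm f 1 μ + eLpNorm f ∞ μ) * (eLpNorm g 1 μ + eLpNorm g ∞ μ) *
        ENNReal.ofReal (min 1 (R ^ Module.finrank ℝ E)) := by
  rcases le_or_gt 1 (R ^ Module.finrank ℝ E) with h1 | h1
  · rw [min_eq_left h1, ENNReal.ofReal_one, mul_one]
    exact (lintegral_enorm_comp_smul_mul_le hf hg _).trans (mul_le_mul' le_add_self le_self_add)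
  · have hR : 0 < R := hR.resolve_right fun hd => by simp [hd] at h1
    rw [min_eq_right h1.le]
    calc ∫⁻ x, ‖f (R⁻¹ • x)‖ₑ * ‖g x‖ₑ ∂μ
        ≤ ENNReal.ofReal (R ^ Module.finrank ℝ E) * eLpNorm f 1 μ * eLpNorm g ∞ μ :=
          lintegral_enorm_comp_inv_smul_mul_le hf hR
      _ = eLpNorm f 1 μ * eLpNorm g ∞ μ * ENNReal.ofReal (R ^ Module.finrank ℝ E) := by ring
      _ ≤ _ := by gcongr <;> simp

theorem ae_norm_pos_or_finrank_eq_zero : ∀ᵐ y ∂μ, 0 < ‖y‖ ∨ Module.finrank ℝ E = 0 := by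
  rcases Nat.eq_zero_or_pos (Module.finrank ℝ E) with hd | hd
  · exact .of_forall fun _ => Or.inr hd
  · have : Nontrivial E := Module.finrank_pos_iff.1 hd
    filter_upwards [measure_eq_zero_iff_ae_notMem.1 (measure_singleton (0 : E))] with y hy
    exact Or.inl (norm_pos_iff.2 hy)

end HaarScaling

section Hausdorff

variable {n : ℕ} {Φ : EuclideanSpace ℝ (Fin n) → ℝ}

theorem enorm_hausdorffOp_le (hΦnn : ∀ y, 0 ≤ Φ y) (f : EuclideanSpace ℝ (Fin n) → ℂ)
    (x : EuclideanSpace ℝ (Fin n)) :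
    ‖hausdorffOp Φ f x‖ₑ ≤ ∫⁻ y, ENNReal.ofReal (Φ y) * ‖f (‖y‖⁻¹ • x)‖ₑ := by
  refine (enorm_integral_le_lintegral_enorm _).trans_eq (lintegral_congr fun y => ?_)
  rw [enorm_mul, ← ofReal_norm, Complex.norm_real, Real.norm_of_nonneg (hΦnn y)]

theorem enorm_integral_hausdorffOp_mul_le (hΦm : Measurable Φ) (hΦnn : ∀ y, 0 ≤ Φ y)
    {f g : EuclideanSpace ℝ (Fin n) → ℂ} (hf : Continuous f) (hg : Continuous g) :
    ‖∫ x, hausdorffOp Φ f x * g x‖ₑ ≤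
      (eLpNorm f 1 volume + eLpNorm f ⊤ volume) * (eLpNorm g 1 volume + eLpNorm g ⊤ volume) *
        ∫⁻ y, ENNReal.ofReal (Φ y * min 1 (‖y‖ ^ n)) := by
  set M := (eLpNorm f 1 volume + eLpNorm f ⊤ volume) * (eLpNorm g 1 volume + eLpNorm g ⊤ volume)
  have hmeas : AEMeasurable (Function.uncurry fun x y : EuclideanSpace ℝ (Fin n) =>
      ENNReal.ofReal (Φ y) * ‖f (‖y‖⁻¹ • x)‖ₑ * ‖g x‖ₑ) (volume.prod volume) := by
    unfold Function.uncurry; fun_prop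
  have hinner : ∀ᵐ y : EuclideanSpace ℝ (Fin n), ∫⁻ x, ‖f (‖y‖⁻¹ • x)‖ₑ * ‖g x‖ₑ ≤
      M * ENNReal.ofReal (min 1 (‖y‖ ^ n)) := by
    filter_upwards [ae_norm_pos_or_finrank_eq_zero] with y hy
    simpa only [finrank_euclideanSpace_fin] using
      lintegral_enorm_comp_inv_smul_mul_le_min hf hg.aestronglyMeasurable hy
  calc ‖∫ x, hausdorffOp Φ f x * g x‖ₑ
      ≤ ∫⁻ x, ‖hausdorffOp Φ f x‖ₑ * ‖g x‖ₑ := by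
        simpa only [enorm_mul] using
          enorm_integral_le_lintegral_enorm (fun x => hausdorffOp Φ f x * g x)
    _ ≤ ∫⁻ x, ∫⁻ y, ENNReal.ofReal (Φ y) * ‖f (‖y‖⁻¹ • x)‖ₑ * ‖g x‖ₑ := by
        refine lintegral_mono fun x => ?_
        rw [lintegral_mul_const' _ _ enorm_ne_top]
        exact mul_le_mul_left (enorm_hausdorffOp_le hΦnn f x) _
    _ = ∫⁻ y, ENNReal.ofReal (Φ y) * ∫⁻ x, ‖f (‖y‖⁻¹ • x)‖ₑ * ‖g x‖ₑ := by
        rw [lintegral_lintegral_swap hmeas]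
        simp only [mul_assoc, lintegral_const_mul' _ _ ENNReal.ofReal_ne_top]
    _ ≤ ∫⁻ y, M * ENNReal.ofReal (Φ y * min 1 (‖y‖ ^ n)) := by
        refine lintegral_mono_ae (hinner.mono fun y hy => ?_)
        rw [ENNReal.ofReal_mul (hΦnn y), mul_left_comm]
        gcongr
    _ = M * ∫⁻ y, ENNReal.ofReal (Φ y * min 1 (‖y‖ ^ n)) := by
        rw [lintegral_const_mul'' _ (by fun_prop)]

end Hausdorff

theorem stmt6 {n : ℕ} (Φ : EuclideanSpace ℝ (Fin n) → ℝ)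
    (hΦm : Measurable Φ) (hΦnn : ∀ y, 0 ≤ Φ y)
    (hfin : (∫⁻ y, ENNReal.ofReal (Φ y * min 1 (‖y‖ ^ n))) < ⊤)
    (f : SchwartzMap (EuclideanSpace ℝ (Fin n)) ℂ) :
    (∀ g : SchwartzMap (EuclideanSpace ℝ (Fin n)) ℂ,
      (‖∫ x, hausdorffOp Φ (⇑f) x * g x‖₊ : ℝ≥0∞) ≤
        (eLpNorm (⇑f) 1 volume + eLpNorm (⇑f) ⊤ volume) *
          (eLpNorm (⇑g) 1 volume + eLpNorm (⇑g) ⊤ volume) *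
            ∫⁻ y, ENNReal.ofReal (Φ y * min 1 (‖y‖ ^ n))) ∧
    ∀ G : ℕ → SchwartzMap (EuclideanSpace ℝ (Fin n)) ℂ, Filter.Tendsto G Filter.atTop (nhds 0) →
      Filter.Tendsto (fun l => ∫ x, hausdorffOp Φ (⇑f) x * (G l) x)
        Filter.atTop (nhds 0) := by
  have hbound (g : 𝓢(EuclideanSpace ℝ (Fin n), ℂ)) :=
    enorm_integral_hausdorffOp_mul_le hΦm hΦnn f.continuous g.continuous
  refine ⟨hbound, fun G hG => ?_⟩
  have hf : eLpNorm (⇑f) 1 volume + eLpNorm (⇑f) ⊤ volume ≠ ⊤ :=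
    ENNReal.add_ne_top.2 ⟨(f.eLpNorm_lt_top 1 volume).ne, (f.eLpNorm_lt_top ⊤ volume).ne⟩
  have hGnorm : Tendsto (fun l => eLpNorm (⇑(G l)) 1 volume + eLpNorm (⇑(G l)) ⊤ volume)
      atTop (𝓝 0) := by
    simpa using (SchwartzMap.tendsto_eLpNorm_zero 1 volume hG).add
      (SchwartzMap.tendsto_eLpNorm_zero ⊤ volume hG)
  refine tendsto_zero_of_enorm_le_const_mul (ENNReal.mul_ne_top hf hfin.ne) hGnorm fun l => ?_
  exact (hbound (G l)).trans_eq (mul_right_comm _ _ _)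

end
end
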